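/- arXiv:2204.12176 — 2 statements merged into one kernel-verified Lean document; each statement's English description precedes it below -/
import Mathlib

section
/- Let α > 0 and C be real numbers, let p_{u₁}, p_{u₂} > 0 be user propensities and p_{i₁}, p_{i₂} > 0 be item propensities, and let s_{u₁,i₁}, s_{u₂,i₂}, s_{u₁,i₂}, s_{u₂,i₁} be real numbers (true relevance scores). Suppose s_{u₁,i₁} ≥ (C − ln p_{u₁} − ln p_{i₁})/(1+α), s_{u₂,i₂} ≥ (C − ln p_{u₂} − ln p_{i₂})/(1+α), s_{u₁,i₂} < (C − ln p_{u₁} − ln p_{i₂})/(1+α), and s_{u₂,i₁} < (C − ln p_{u₂} − ln p_{i₁})/(1+α). Then s_{u₁,i₁} + s_{u₂,i₂} − s_{u₁,i₂} − s_{u₂,i₁} > 0. -/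
theorem cpr_stmt_5 (α C pu₁ pu₂ pi₁ pi₂ s₁₁ s₂₂ s₁₂ s₂₁ : ℝ)
    (hα : 0 < α) (hpu₁ : 0 < pu₁) (hpu₂ : 0 < pu₂) (hpi₁ : 0 < pi₁) (hpi₂ : 0 < pi₂)
    (h₁₁ : s₁₁ ≥ (C - Real.log pu₁ - Real.log pi₁) / (1 + α))
    (h₂₂ : s₂₂ ≥ (C - Real.log pu₂ - Real.log pi₂) / (1 + α))
    (h₁₂ : s₁₂ < (C - Real.log pu₁ - Real.log pi₂) / (1 + α))
    (h₂₁ : s₂₁ < (C - Real.log pu₂ - Real.log pi₁) / (1 + α)) :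
    s₁₁ + s₂₂ - s₁₂ - s₂₁ > 0 := by
  have h1 : (0:ℝ) < 1 + α := by linarith
  rw [ge_iff_le, div_le_iff₀ h1] at h₁₁ h₂₂
  rw [lt_div_iff₀ h1] at h₁₂ h₂₁
  nlinarith [h₁₁, h₂₂, h₁₂, h₂₁]
end

section
/- Let k ≥ 2, let α > 0 and C be real numbers, let a : Fin k → ℝ and b : Fin k → ℝ be arbitrary functions (the log user propensities ln p_{u_j} and log item propensities ln p_{i_j}), and let S : Fin k → Fin k → ℝ assign a true relevance score S j m to user j and item m. Suppose for every j : Fin k that S j j ≥ (C − a j − b j)/(1+α) and S j (j+1) < (C − a j − b (j+1))/(1+α), where j+1 is taken cyclically in Fin k. Then ∑_{j} S j j − ∑_{j} S j (j+1) > 0. -/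
theorem cpr_stmt_6 (k : ℕ) [NeZero k] (hk : 2 ≤ k) (α C : ℝ) (hα : 0 < α)
    (a b : Fin k → ℝ) (S : Fin k → Fin k → ℝ)
    (hpos : ∀ j : Fin k, S j j ≥ (C - a j - b j) / (1 + α))
    (hneg : ∀ j : Fin k, S j (j + 1) < (C - a j - b (j + 1)) / (1 + α)) :
    (∑ j : Fin k, S j j) - (∑ j : Fin k, S j (j + 1)) > 0 := by
  have hne : (Finset.univ : Finset (Fin k)).Nonempty := Finset.univ_nonempty
  have h1 : ∑ j : Fin k, S j j ≥ ∑ j : Fin k, (C - a j - b j) / (1 + α) :=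
    Finset.sum_le_sum (fun j _ => hpos j)
  have h2 : ∑ j : Fin k, S j (j + 1) < ∑ j : Fin k, (C - a j - b (j + 1)) / (1 + α) :=
    Finset.sum_lt_sum_of_nonempty hne (fun j _ => hneg j)
  have hb : ∑ j : Fin k, b (j + 1) = ∑ j : Fin k, b j :=
    Fintype.sum_equiv (Equiv.addRight (1 : Fin k)) _ _ (fun j => rfl)
  have h3 : ∑ j : Fin k, (C - a j - b (j + 1)) / (1 + α)
      = ∑ j : Fin k, (C - a j - b j) / (1 + α) := by
    rw [← Finset.sum_div, ← Finset.sum_div]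
    congr 1
    simp only [sub_sub, Finset.sum_sub_distrib, Finset.sum_add_distrib, hb]
  linarith
end
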